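/- arXiv:cond-mat/0012045 — 6 statements merged into one kernel-verified Lean document; each statement's English description precedes it below -/
import Mathlib

section
/- Let (A_t) and (b_t) be bounded real sequences indexed by natural numbers such that the Cesàro averages of b converge: lim_{τ→∞} (1/τ) ∑_{t=1}^{τ} b_t = b, and the partial sums a_τ = ∑_{t=0}^{τ} A_t converge to a. Then lim_{τ→∞} (1/τ) ∑_{t=1}^{τ} ∑_{t'=0}^{t} A_{t-t'} b_{t'} = a·b. -/
open Filter Finset

private lemma HC_aux1 (A b : ℕ → ℝ) : ∀ τ : ℕ,
    ∑ t ∈ Finset.Icc 1 τ, ∑ t' ∈ Finset.range (t + 1), A (t - t') * b t'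
      = (∑ u ∈ Finset.range (τ + 1), A u * (b 0 + ∑ k ∈ Finset.Icc 1 (τ - u), b k))
        - A 0 * b 0
  | 0 => by simp
  | (τ+1) => by
      rw [Finset.sum_Icc_succ_top (Nat.le_add_left 1 τ), HC_aux1 A b τ]
      have reflect : ∑ t' ∈ Finset.range (τ + 1 + 1), A (τ + 1 - t') * b t'
          = ∑ u ∈ Finset.range (τ + 1 + 1), A u * b (τ + 1 - u) := by
        rw [← Finset.sum_range_reflect (fun u => A u * b (τ + 1 - u)) (τ + 1 + 1)]
        apply Finset.sum_congr rfl
        intro j hj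
        rw [Finset.mem_range] at hj
        have h1 : τ + 1 + 1 - 1 - j = τ + 1 - j := by omega
        have h2 : τ + 1 - (τ + 1 - j) = j := by omega
        rw [h1, h2]
      rw [reflect]
      rw [Finset.sum_range_succ (fun u => A u * (b 0 + ∑ k ∈ Finset.Icc 1 (τ + 1 - u), b k)) (τ+1)]
      rw [Finset.sum_range_succ (fun u => A u * b (τ + 1 - u)) (τ+1)]
      have key : ∀ u ∈ Finset.range (τ+1),
          A u * (b 0 + ∑ k ∈ Finset.Icc 1 (τ + 1 - u), b k)
          = A u * (b 0 + ∑ k ∈ Finset.Icc 1 (τ - u), b k) + A u * b (τ + 1 - u) := by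
        intro u hu
        rw [Finset.mem_range] at hu
        have h1 : τ + 1 - u = (τ - u) + 1 := by omega
        rw [h1, Finset.sum_Icc_succ_top (Nat.le_add_left 1 (τ - u))]
        ring
      rw [Finset.sum_congr rfl key, Finset.sum_add_distrib]
      simp
      ring

private lemma HC_aux2 (A : ℕ → ℝ) : ∀ τ : ℕ,
    ∑ u ∈ Finset.range (τ + 1), A u * ((τ - u : ℕ) : ℝ)
      = ∑ n ∈ Finset.range τ, ∑ t ∈ Finset.range (n + 1), A t
  | 0 => by simp
  | (τ+1) => by
      rw [Finset.sum_range_succ (fun u => A u * ((τ + 1 - u : ℕ) : ℝ)) (τ+1),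
          Finset.sum_range_succ (fun n => ∑ t ∈ Finset.range (n+1), A t) τ,
          ← HC_aux2 A τ]
      have key : ∀ u ∈ Finset.range (τ+1),
          A u * ((τ + 1 - u : ℕ) : ℝ) = A u * ((τ - u : ℕ) : ℝ) + A u := by
        intro u hu; rw [Finset.mem_range] at hu
        have h1 : (τ + 1 - u : ℕ) = (τ - u) + 1 := by omega
        rw [h1]; push_cast; ring
      rw [Finset.sum_congr rfl key, Finset.sum_add_distrib]
      simp

private lemma HC_aux3 (r Q : ℕ → ℝ) (hQ0 : Q 0 = 0) (τ : ℕ) :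
    ∑ u ∈ Finset.range (τ + 1), (r u - r (u + 1)) * Q (τ - u)
      = r 0 * Q τ + ∑ i ∈ Finset.range τ, r (i + 1) * (Q (τ - (i + 1)) - Q (τ - i)) := by
  have expand : ∀ u ∈ Finset.range (τ + 1), (r u - r (u+1)) * Q (τ - u)
      = r u * Q (τ - u) - r (u+1) * Q (τ - u) := fun u _ => by ring
  rw [Finset.sum_congr rfl expand, Finset.sum_sub_distrib]
  rw [Finset.sum_range_succ' (fun u => r u * Q (τ - u)) τ]
  rw [Finset.sum_range_succ (fun u => r (u+1) * Q (τ - u)) τ]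
  simp only [Nat.sub_self, Nat.sub_zero, hQ0, mul_zero, add_zero]
  have : ∀ i ∈ Finset.range τ, r (i+1) * (Q (τ - (i+1)) - Q (τ - i))
      = r (i+1) * Q (τ - (i+1)) - r (i+1) * Q (τ - i) := fun i _ => by ring
  rw [Finset.sum_congr rfl this, Finset.sum_sub_distrib]
  ring

/-- Lemma 1 of the appendix of Heimel–Coolen: convolution of a convergent
series with a Cesàro-convergent bounded sequence. -/
theorem stmt_0 (A b : ℕ → ℝ) (CA CB : ℝ)
    (hA_bd : ∀ t, |A t| ≤ CA) (hb_bd : ∀ t, |b t| ≤ CB)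
    (bbar a : ℝ)
    (hb : Tendsto (fun τ : ℕ => (1 / (τ : ℝ)) * ∑ t ∈ Finset.Icc 1 τ, b t)
      atTop (nhds bbar))
    (hA : Tendsto (fun τ : ℕ => ∑ t ∈ Finset.range (τ + 1), A t)
      atTop (nhds a)) :
    Tendsto (fun τ : ℕ =>
        (1 / (τ : ℝ)) * ∑ t ∈ Finset.Icc 1 τ,
          ∑ t' ∈ Finset.range (t + 1), A (t - t') * b t')
      atTop (nhds (a * bbar)) := by
  -- notation
  set s : ℕ → ℝ := fun n => ∑ t ∈ Finset.range n, A t with hs_def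
  set P : ℕ → ℝ := fun n => ∑ t ∈ Finset.Icc 1 n, b t with hP_def
  set Q : ℕ → ℝ := fun n => P n - (n : ℝ) * bbar with hQ_def
  set r : ℕ → ℝ := fun n => a - s n with hr_def
  have hQ0 : Q 0 = 0 := by simp [hQ_def, hP_def]
  have hs : Tendsto s atTop (nhds a) := (tendsto_add_atTop_iff_nat 1).mp hA
  have hr0 : Tendsto r atTop (nhds 0) := by
    have := (tendsto_const_nhds : Tendsto (fun _ : ℕ => a) atTop (nhds a)).sub hs
    simpa using this
  have hArs : ∀ u, A u = r u - r (u + 1) := by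
    intro u
    simp only [hr_def, hs_def]
    rw [Finset.sum_range_succ]
    ring
  -- Q τ / τ → 0
  have hQsmall : Tendsto (fun τ : ℕ => (1 / (τ : ℝ)) * Q τ) atTop (nhds 0) := by
    have h1 : Tendsto (fun τ : ℕ => (1 / (τ : ℝ)) * P τ - bbar) atTop (nhds 0) := by
      simpa using hb.sub (tendsto_const_nhds : Tendsto (fun _ : ℕ => bbar) atTop (nhds bbar))
    apply h1.congr'
    filter_upwards [eventually_ge_atTop 1] with τ hτ
    have hτ0 : (τ : ℝ) ≠ 0 := by positivity
    simp only [hQ_def]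
    field_simp
  have hQabs : Tendsto (fun τ : ℕ => (1 / (τ : ℝ)) * |Q τ|) atTop (nhds 0) := by
    have := hQsmall.abs
    simp only [abs_zero] at this
    apply this.congr
    intro τ
    rw [abs_mul, abs_of_nonneg (by positivity : (0:ℝ) ≤ 1 / (τ:ℝ))]
  -- Cesàro of |r (i+1)| → 0
  have hrabs : Tendsto (fun i : ℕ => |r (i + 1)|) atTop (nhds 0) := by
    have := (hr0.comp (tendsto_add_atTop_nat 1)).abs
    simpa [Function.comp] using this
  have hces : Tendsto (fun τ : ℕ => (1 / (τ : ℝ)) * ∑ i ∈ Finset.range τ, |r (i + 1)|)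
      atTop (nhds 0) := by
    simpa [one_div] using hrabs.cesaro
  -- Cesàro of partial sums → a
  have hcesA : Tendsto (fun τ : ℕ => (1 / (τ : ℝ)) * ∑ n ∈ Finset.range τ, s (n + 1))
      atTop (nhds a) := by
    simpa [one_div] using hA.cesaro
  set K : ℝ := CB + |bbar| with hK_def
  have hKnn : 0 ≤ K := le_trans (abs_nonneg (b 0)) (le_trans (hb_bd 0) (by simp [hK_def, abs_nonneg]))
  -- the Abel error term tends to 0
  have hT : Tendsto (fun τ : ℕ => (1 / (τ : ℝ)) * ∑ u ∈ Finset.range (τ + 1), A u * Q (τ - u))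
      atTop (nhds 0) := by
    apply squeeze_zero_norm
      (a := fun τ : ℕ => |r 0| * ((1 / (τ : ℝ)) * |Q τ|)
        + K * ((1 / (τ : ℝ)) * ∑ i ∈ Finset.range τ, |r (i + 1)|))
    · intro τ
      have hQd : ∀ i ∈ Finset.range τ, |Q (τ - (i + 1)) - Q (τ - i)| ≤ K := by
        intro i hi
        rw [Finset.mem_range] at hi
        have h1 : τ - i = (τ - (i + 1)) + 1 := by omega
        set m := τ - (i + 1)
        have hPm : P (m + 1) = P m + b (m + 1) := by
          simp only [hP_def]
          exact Finset.sum_Icc_succ_top (Nat.le_add_left 1 m) b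
        have : Q m - Q (m + 1) = bbar - b (m + 1) := by
          simp only [hQ_def, hPm]
          push_cast
          ring
        rw [h1, this, hK_def]
        calc |bbar - b (m + 1)| ≤ |bbar| + |b (m + 1)| := abs_sub _ _
          _ ≤ |bbar| + CB := by linarith [hb_bd (m + 1)]
          _ = CB + |bbar| := by ring
      have habel : ∑ u ∈ Finset.range (τ + 1), A u * Q (τ - u)
          = r 0 * Q τ + ∑ i ∈ Finset.range τ, r (i + 1) * (Q (τ - (i + 1)) - Q (τ - i)) := by
        rw [Finset.sum_congr rfl (fun u _ => by rw [hArs u])]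
        exact HC_aux3 r Q hQ0 τ
      rw [Real.norm_eq_abs, abs_mul, habel,
        abs_of_nonneg (by positivity : (0:ℝ) ≤ 1 / (τ:ℝ))]
      have hb1 : |r 0 * Q τ + ∑ i ∈ Finset.range τ, r (i + 1) * (Q (τ - (i + 1)) - Q (τ - i))|
          ≤ |r 0| * |Q τ| + ∑ i ∈ Finset.range τ, |r (i + 1)| * K := by
        calc _ ≤ |r 0 * Q τ| + |∑ i ∈ Finset.range τ, r (i + 1) * (Q (τ - (i + 1)) - Q (τ - i))| :=
              abs_add_le _ _
          _ ≤ |r 0| * |Q τ| + ∑ i ∈ Finset.range τ, |r (i + 1)| * K := by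
              rw [abs_mul]
              gcongr
              calc |∑ i ∈ Finset.range τ, r (i + 1) * (Q (τ - (i + 1)) - Q (τ - i))|
                  ≤ ∑ i ∈ Finset.range τ, |r (i + 1) * (Q (τ - (i + 1)) - Q (τ - i))| :=
                    Finset.abs_sum_le_sum_abs _ _
                _ ≤ ∑ i ∈ Finset.range τ, |r (i + 1)| * K := by
                    apply Finset.sum_le_sum
                    intro i hi
                    rw [abs_mul]
                    exact mul_le_mul_of_nonneg_left (hQd i hi) (abs_nonneg _)
      have h1τ : (0:ℝ) ≤ 1 / (τ:ℝ) := by positivity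
      calc (1 / (τ:ℝ)) * |r 0 * Q τ + ∑ i ∈ Finset.range τ, r (i + 1) * (Q (τ - (i + 1)) - Q (τ - i))|
          ≤ (1 / (τ:ℝ)) * (|r 0| * |Q τ| + ∑ i ∈ Finset.range τ, |r (i + 1)| * K) := by
            exact mul_le_mul_of_nonneg_left hb1 h1τ
        _ = |r 0| * ((1 / (τ:ℝ)) * |Q τ|) + K * ((1 / (τ:ℝ)) * ∑ i ∈ Finset.range τ, |r (i + 1)|) := by
            rw [← Finset.sum_mul]
            ring
    · have := ((hQabs.const_mul (|r 0|)).add (hces.const_mul K))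
      simpa using this
  -- main decomposition
  have hdecomp : ∀ τ : ℕ,
      (1 / (τ : ℝ)) * ∑ t ∈ Finset.Icc 1 τ, ∑ t' ∈ Finset.range (t + 1), A (t - t') * b t'
      = bbar * ((1 / (τ : ℝ)) * ∑ n ∈ Finset.range τ, s (n + 1))
        + (1 / (τ : ℝ)) * ∑ u ∈ Finset.range (τ + 1), A u * Q (τ - u)
        + (1 / (τ : ℝ)) * (b 0 * s (τ + 1) - A 0 * b 0) := by
    intro τ
    have e1 := HC_aux1 A b τ
    have e2 : ∑ u ∈ Finset.range (τ + 1), A u * (b 0 + P (τ - u))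
        = b 0 * s (τ + 1) + bbar * (∑ n ∈ Finset.range τ, s (n + 1))
          + ∑ u ∈ Finset.range (τ + 1), A u * Q (τ - u) := by
      have : ∀ u ∈ Finset.range (τ + 1), A u * (b 0 + P (τ - u))
          = A u * b 0 + bbar * (A u * ((τ - u : ℕ) : ℝ)) + A u * Q (τ - u) := by
        intro u _
        simp only [hQ_def]
        ring
      rw [Finset.sum_congr rfl this, Finset.sum_add_distrib, Finset.sum_add_distrib,
        ← Finset.mul_sum, HC_aux2 A τ, ← Finset.sum_mul]
      simp only [hs_def]
      ring
    calc (1 / (τ : ℝ)) * ∑ t ∈ Finset.Icc 1 τ, ∑ t' ∈ Finset.range (t + 1), A (t - t') * b t'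
        = (1 / (τ : ℝ)) * ((∑ u ∈ Finset.range (τ + 1), A u * (b 0 + P (τ - u))) - A 0 * b 0) := by
          rw [e1]
      _ = _ := by rw [e2]; ring
  rw [show (fun τ : ℕ =>
        (1 / (τ : ℝ)) * ∑ t ∈ Finset.Icc 1 τ,
          ∑ t' ∈ Finset.range (t + 1), A (t - t') * b t') = fun τ : ℕ =>
      bbar * ((1 / (τ : ℝ)) * ∑ n ∈ Finset.range τ, s (n + 1))
        + (1 / (τ : ℝ)) * ∑ u ∈ Finset.range (τ + 1), A u * Q (τ - u)
        + (1 / (τ : ℝ)) * (b 0 * s (τ + 1) - A 0 * b 0) from funext hdecomp]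
  have hlast : Tendsto (fun τ : ℕ => (1 / (τ : ℝ)) * (b 0 * s (τ + 1) - A 0 * b 0))
      atTop (nhds 0) := by
    have h2 : Tendsto (fun τ : ℕ => b 0 * s (τ + 1) - A 0 * b 0) atTop
        (nhds (b 0 * a - A 0 * b 0)) := (hA.const_mul (b 0)).sub tendsto_const_nhds
    have := tendsto_one_div_atTop_nhds_zero_nat.mul h2
    simpa using this
  have := ((hcesA.const_mul bbar).add hT).add hlast
  simpa [mul_comm] using this
end

section
/- Let G : ℕ → ℝ be a kernel with summable series ∑_{t≥0} G(t) = k, defining a lower-triangular Toeplitz operator (G^n)_{t,t'} via n-fold convolution, and let s : ℕ → ℝ be a bounded sequence with Cesàro mean lim_{τ→∞} (1/τ) ∑_{t=1}^{τ} s(t) = s. Then for every natural number n, lim_{τ→∞} (1/τ) ∑_{t=1}^{τ} ∑_{t'=0}^{t} (G^{∗n})(t-t') s(t') = k^n · s, where G^{∗n} denotes the n-fold convolution of G with itself (and G^{∗0} is the Kronecker delta at 0). -/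
open Filter Finset

/-- The n-fold convolution power of a causal kernel `G : ℕ → ℝ`:
`convPow G 0` is the Kronecker delta at 0, and
`convPow G (n+1) t = ∑_{u=0}^t G (t-u) * convPow G n u`. -/
noncomputable def convPow (G : ℕ → ℝ) : ℕ → ℕ → ℝ
  | 0 => fun t => if t = 0 then 1 else 0
  | n + 1 => fun t => ∑ u ∈ Finset.range (t + 1), G (t - u) * convPow G n u

lemma coeff_mul_mk (φ : PowerSeries ℝ) (g : ℕ → ℝ) (t : ℕ) :
    PowerSeries.coeff t (φ * PowerSeries.mk g) =
      ∑ u ∈ range (t + 1), PowerSeries.coeff (t - u) φ * g u := by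
  rw [PowerSeries.coeff_mul,
    Finset.Nat.sum_antidiagonal_eq_sum_range_succ
      (fun a b => PowerSeries.coeff a φ * PowerSeries.coeff b (PowerSeries.mk g))]
  rw [← Finset.sum_range_reflect]
  refine Finset.sum_congr rfl fun u hu => ?_
  simp only [Finset.mem_range] at hu
  have h1 : t + 1 - 1 - u = t - u := by omega
  have h2 : t - (t - u) = u := by omega
  rw [h1, h2, PowerSeries.coeff_mk]

lemma mk_convPow (G : ℕ → ℝ) : ∀ n, PowerSeries.mk (convPow G n) = (PowerSeries.mk G) ^ n := by
  intro n
  induction n with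
  | zero => ext t; simp [convPow, PowerSeries.coeff_one]
  | succ n ih =>
    ext t
    rw [pow_succ', ← ih, coeff_mul_mk]
    simp only [PowerSeries.coeff_mk, convPow]

lemma sumRangeReflectAux (f : ℕ → ℝ) (n : ℕ) :
    ∑ u ∈ range (n + 1), f (n - u) = ∑ u ∈ range (n + 1), f u := by
  rw [← Finset.sum_range_reflect f (n + 1)]
  refine Finset.sum_congr rfl fun u hu => ?_
  simp only [Finset.mem_range] at hu
  norm_num

lemma convPow_abs_sum (G : ℕ → ℝ) (hG : Summable (fun t => |G t|)) :
    ∀ n m, ∑ d ∈ range m, |convPow G n d| ≤ (∑' t, |G t|) ^ n := by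
  have hB : (0:ℝ) ≤ ∑' t, |G t| := tsum_nonneg fun t => abs_nonneg _
  intro n
  induction n with
  | zero =>
    intro m
    have : ∀ d, |convPow G 0 d| = if d = 0 then (1:ℝ) else 0 := by
      intro d; simp [convPow]; split <;> simp
    simp only [this, pow_zero]
    rw [Finset.sum_ite_eq' (range m) 0 (fun _ => (1:ℝ))]
    split <;> norm_num
  | succ n ih =>
    intro m
    calc ∑ d ∈ range m, |convPow G (n+1) d|
        ≤ ∑ d ∈ range m, ∑ u ∈ range (d+1), |G (d - u)| * |convPow G n u| := by
          refine Finset.sum_le_sum fun d _ => ?_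
          refine le_trans (Finset.abs_sum_le_sum_abs _ _) ?_
          refine le_of_eq (Finset.sum_congr rfl fun u _ => abs_mul _ _)
      _ = ∑ u ∈ range m, ∑ d ∈ Ico u m, |G (d - u)| * |convPow G n u| := by
          refine Finset.sum_comm' ?_
          intro d u
          simp only [Finset.mem_range, Finset.mem_Ico]
          omega
      _ = ∑ u ∈ range m, |convPow G n u| * ∑ j ∈ range (m - u), |G j| := by
          refine Finset.sum_congr rfl fun u _ => ?_
          rw [Finset.mul_sum, Finset.sum_Ico_eq_sum_range]
          refine Finset.sum_congr rfl fun j _ => ?_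
          rw [mul_comm]
          have h : u + j - u = j := by omega
          rw [h]
      _ ≤ ∑ u ∈ range m, |convPow G n u| * ∑' t, |G t| := by
          refine Finset.sum_le_sum fun u _ => ?_
          refine mul_le_mul_of_nonneg_left ?_ (abs_nonneg _)
          exact Summable.sum_le_tsum (range (m - u)) (fun t _ => abs_nonneg _) hG
      _ = (∑ u ∈ range m, |convPow G n u|) * ∑' t, |G t| := by rw [Finset.sum_mul]
      _ ≤ (∑' t, |G t|) ^ n * ∑' t, |G t| := mul_le_mul_of_nonneg_right (ih m) hB
      _ = (∑' t, |G t|) ^ (n + 1) := by rw [pow_succ]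

lemma cesaro_conv (H : ℕ → ℝ) (κ : ℝ) (hH : Summable (fun t => |H t|)) (hHκ : HasSum H κ)
    (s : ℕ → ℝ) (C : ℝ) (hb : ∀ t, |s t| ≤ C) (sbar : ℝ)
    (hs : Tendsto (fun τ : ℕ => (1 / (τ : ℝ)) * ∑ t ∈ Finset.Icc 1 τ, s t) atTop (nhds sbar)) :
    Tendsto (fun τ : ℕ => (1 / (τ : ℝ)) * ∑ t ∈ Finset.Icc 1 τ,
        ∑ t' ∈ Finset.range (t + 1), H (t - t') * s t')
      atTop (nhds (κ * sbar)) := by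
  have hC : (0:ℝ) ≤ C := le_trans (abs_nonneg _) (hb 0)
  set A : ℕ → ℝ := fun m => ∑ t ∈ Finset.Icc 1 m, s t with hA
  have hA0 : A 0 = 0 := by simp [hA]
  have hA_bd : ∀ m, |A m| ≤ C * m := by
    intro m
    refine le_trans (Finset.abs_sum_le_sum_abs _ _) ?_
    calc ∑ t ∈ Finset.Icc 1 m, |s t| ≤ ∑ t ∈ Finset.Icc 1 m, C :=
          Finset.sum_le_sum fun t _ => hb t
      _ = C * m := by rw [Finset.sum_const, Nat.card_Icc]; simp [mul_comm]
  have hrange : ∀ m : ℕ, range (m + 1) = insert 0 (Finset.Icc 1 m) := by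
    intro m; ext x; simp; omega
  -- key algebraic identity
  have hiden : ∀ τ : ℕ, (∑ t ∈ Finset.Icc 1 τ, ∑ t' ∈ Finset.range (t + 1), H (t - t') * s t')
      = (∑ d ∈ range (τ + 1), H d * A (τ - d)) +
        ((∑ d ∈ range (τ + 1), H d) * s 0 - H 0 * s 0) := by
    intro τ
    have h1 : ∀ t, ∑ t' ∈ range (t + 1), H (t - t') * s t'
        = PowerSeries.coeff t (PowerSeries.mk H * PowerSeries.mk s) := by
      intro t
      rw [coeff_mul_mk]
      simp [PowerSeries.coeff_mk]
    have hS : PowerSeries.mk s * PowerSeries.mk (fun _ => (1:ℝ))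
        = PowerSeries.mk (fun u => s 0 + A u) := by
      ext u
      rw [coeff_mul_mk]
      simp only [PowerSeries.coeff_mk, mul_one]
      rw [sumRangeReflectAux s u, hrange u, Finset.sum_insert (by simp)]
    have h2 : ∑ t ∈ range (τ + 1), PowerSeries.coeff t (PowerSeries.mk H * PowerSeries.mk s)
        = ∑ u ∈ range (τ + 1), H (τ - u) * (s 0 + A u) := by
      have := coeff_mul_mk (PowerSeries.mk H * PowerSeries.mk s) (fun _ => (1:ℝ)) τ
      simp only [mul_one] at this
      rw [← sumRangeReflectAux (fun t => PowerSeries.coeff t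
        (PowerSeries.mk H * PowerSeries.mk s)) τ, ← this, mul_assoc, hS, coeff_mul_mk]
      simp [PowerSeries.coeff_mk]
    have h3 : ∑ t ∈ range (τ + 1), PowerSeries.coeff t (PowerSeries.mk H * PowerSeries.mk s)
        = H 0 * s 0 + ∑ t ∈ Finset.Icc 1 τ, ∑ t' ∈ range (t + 1), H (t - t') * s t' := by
      rw [hrange τ, Finset.sum_insert (by simp)]
      rw [← h1 0]
      congr 1
      · simp
      · exact Finset.sum_congr rfl fun t _ => (h1 t).symm
    have h4 : ∑ u ∈ range (τ + 1), H (τ - u) * (s 0 + A u)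
        = (∑ d ∈ range (τ + 1), H d * A (τ - d)) + (∑ d ∈ range (τ + 1), H d) * s 0 := by
      have e1 : ∑ u ∈ range (τ + 1), H (τ - u) * A u
          = ∑ d ∈ range (τ + 1), H d * A (τ - d) := by
        rw [← sumRangeReflectAux (fun d => H d * A (τ - d)) τ]
        refine Finset.sum_congr rfl fun u hu => ?_
        simp only [Finset.mem_range] at hu
        have : τ - (τ - u) = u := by omega
        rw [this]
      have e2 : ∑ u ∈ range (τ + 1), H (τ - u) = ∑ d ∈ range (τ + 1), H d :=
        sumRangeReflectAux H τ
      calc ∑ u ∈ range (τ + 1), H (τ - u) * (s 0 + A u)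
          = ∑ u ∈ range (τ + 1), (H (τ - u) * A u + H (τ - u) * s 0) := by
            refine Finset.sum_congr rfl fun u _ => by ring
        _ = (∑ u ∈ range (τ + 1), H (τ - u) * A u)
            + (∑ u ∈ range (τ + 1), H (τ - u)) * s 0 := by
            rw [Finset.sum_add_distrib, Finset.sum_mul]
        _ = _ := by rw [e1, e2]
    have := h3.symm.trans (h2.trans h4)
    linarith [this]
  -- the remainder term tends to zero
  have hHB : ∀ m : ℕ, |∑ d ∈ range m, H d| ≤ ∑' t, |H t| := by
    intro m
    refine le_trans (Finset.abs_sum_le_sum_abs _ _) ?_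
    exact Summable.sum_le_tsum (range m) (fun t _ => abs_nonneg _) hH
  set B := ∑' t, |H t| with hBdef
  have hR : Tendsto (fun τ : ℕ => (1 / (τ : ℝ)) *
      ((∑ d ∈ range (τ + 1), H d) * s 0 - H 0 * s 0)) atTop (nhds 0) := by
    have hg : Tendsto (fun τ : ℕ => (B * |s 0| + |H 0 * s 0|) * (1 / (τ : ℝ))) atTop (nhds 0) := by
      have := tendsto_one_div_atTop_nhds_zero_nat.const_mul (B * |s 0| + |H 0 * s 0|)
      simpa using this
    refine squeeze_zero_norm (fun τ => ?_) hg
    have hτ : (0:ℝ) ≤ 1 / (τ:ℝ) := by positivity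
    rw [Real.norm_eq_abs, abs_mul, abs_of_nonneg hτ, mul_comm]
    refine mul_le_mul_of_nonneg_right ?_ hτ
    refine le_trans (abs_sub _ _) ?_
    refine add_le_add ?_ le_rfl
    rw [abs_mul]
    exact mul_le_mul_of_nonneg_right (hHB _) (abs_nonneg _)
  -- the main term, via dominated convergence
  set F : ℕ → ℕ → ℝ := fun τ d =>
    if d ∈ range (τ + 1) then (1 / (τ : ℝ)) * (H d * A (τ - d)) else 0 with hF
  have hM : Tendsto (fun τ : ℕ => (1 / (τ : ℝ)) * ∑ d ∈ range (τ + 1), H d * A (τ - d))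
      atTop (nhds (κ * sbar)) := by
    have hsumeq : ∀ τ : ℕ, (1 / (τ : ℝ)) * ∑ d ∈ range (τ + 1), H d * A (τ - d)
        = ∑' d, F τ d := by
      intro τ
      rw [Finset.mul_sum]
      rw [tsum_eq_sum (s := range (τ + 1)) (f := F τ)
        (fun b hb => by simp only [hF]; rw [if_neg hb])]
      exact Finset.sum_congr rfl fun d hd => by simp only [hF]; rw [if_pos hd]
    have hdom : Tendsto (fun τ : ℕ => ∑' d, F τ d) atTop (nhds (∑' d, H d * sbar)) := by
      refine tendsto_tsum_of_dominated_convergence (bound := fun d => |H d| * C)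
        (hH.mul_right C) (fun d => ?_) ?_
      · -- pointwise limit
        have hratio : Tendsto (fun τ : ℕ => ((τ - d : ℕ) : ℝ) / (τ : ℝ)) atTop (nhds 1) := by
          have h1 : Tendsto (fun τ : ℕ => 1 - (d : ℝ) * (1 / (τ : ℝ))) atTop (nhds 1) := by
            have := (tendsto_one_div_atTop_nhds_zero_nat.const_mul (d : ℝ)).const_sub 1
            simpa using this
          refine h1.congr' ?_
          filter_upwards [eventually_ge_atTop (d + 1)] with τ hτ
          have hτ0 : (τ : ℝ) ≠ 0 := Nat.cast_ne_zero.mpr (by omega)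
          rw [Nat.cast_sub (by omega)]
          field_simp
        have hmain : Tendsto (fun τ : ℕ =>
            H d * ((1 / ((τ - d : ℕ) : ℝ)) * A (τ - d)) * (((τ - d : ℕ) : ℝ) / (τ : ℝ)))
            atTop (nhds (H d * sbar * 1)) := by
          exact ((tendsto_const_nhds.mul (hs.comp (tendsto_sub_atTop_nat d))).mul hratio)
        rw [mul_one] at hmain
        refine hmain.congr' ?_
        filter_upwards [eventually_ge_atTop (d + 1)] with τ hτ
        have hd : d ∈ range (τ + 1) := by simp; omega
        have hm0 : ((τ - d : ℕ) : ℝ) ≠ 0 := Nat.cast_ne_zero.mpr (by omega)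
        have hτ0 : (τ : ℝ) ≠ 0 := Nat.cast_ne_zero.mpr (by omega)
        simp only [hF]
        rw [if_pos hd]
        field_simp
      · -- bound
        refine Eventually.of_forall fun τ => fun d => ?_
        by_cases hd : d ∈ range (τ + 1)
        · simp only [hF, if_pos hd, Real.norm_eq_abs]
          rcases Nat.eq_zero_or_pos τ with h0 | hpos
          · subst h0
            simp only [Finset.mem_range] at hd
            interval_cases d
            simp [hA0]
            positivity
          · have hτpos : (0:ℝ) < (τ : ℝ) := by exact_mod_cast hpos
            have h1 : |A (τ - d)| ≤ C * τ := by
              refine le_trans (hA_bd _) ?_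
              refine mul_le_mul_of_nonneg_left ?_ hC
              exact_mod_cast Nat.cast_le.mpr (Nat.sub_le τ d)
            rw [abs_mul, abs_mul, abs_of_nonneg (by positivity : (0:ℝ) ≤ 1 / (τ:ℝ))]
            calc (1 / (τ:ℝ)) * (|H d| * |A (τ - d)|)
                ≤ (1 / (τ:ℝ)) * (|H d| * (C * τ)) := by
                  refine mul_le_mul_of_nonneg_left ?_ (by positivity)
                  exact mul_le_mul_of_nonneg_left h1 (abs_nonneg _)
              _ = |H d| * C := by field_simp
        · simp only [hF, if_neg hd, Real.norm_eq_abs, abs_zero]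
          positivity
    have htsum : ∑' d, H d * sbar = κ * sbar := by
      rw [tsum_mul_right, hHκ.tsum_eq]
    rw [htsum] at hdom
    exact hdom.congr fun τ => (hsumeq τ).symm
  have := hM.add hR
  rw [add_zero] at this
  refine this.congr fun τ => ?_
  rw [hiden τ, mul_add]

/-- Lemma 2 of the appendix of Heimel–Coolen. -/
theorem stmt_1 (G : ℕ → ℝ) (k : ℝ)
    (hG : Summable (fun t => |G t|)) (hGk : HasSum G k)
    (s : ℕ → ℝ) (CS : ℝ) (hs_bd : ∀ t, |s t| ≤ CS) (sbar : ℝ)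
    (hs : Tendsto (fun τ : ℕ => (1 / (τ : ℝ)) * ∑ t ∈ Finset.Icc 1 τ, s t)
      atTop (nhds sbar)) :
    ∀ n : ℕ,
      Tendsto (fun τ : ℕ =>
          (1 / (τ : ℝ)) * ∑ t ∈ Finset.Icc 1 τ,
            ∑ t' ∈ Finset.range (t + 1), convPow G n (t - t') * s t')
        atTop (nhds (k ^ n * sbar)) := by
  have hCS : (0:ℝ) ≤ CS := le_trans (abs_nonneg _) (hs_bd 0)
  intro n
  induction n with
  | zero =>
    have hinner : ∀ t, ∑ t' ∈ Finset.range (t + 1), convPow G 0 (t - t') * s t' = s t := by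
      intro t
      rw [Finset.sum_eq_single t]
      · simp [convPow]
      · intro b hb hbt
        simp only [Finset.mem_range] at hb
        simp only [convPow]
        rw [if_neg (by omega), zero_mul]
      · intro h
        simp at h
    simp only [hinner, pow_zero, one_mul]
    exact hs
  | succ n ih =>
    set s' : ℕ → ℝ := fun t => ∑ u ∈ Finset.range (t + 1), convPow G n (t - u) * s u with hs'
    have hs'bd : ∀ t, |s' t| ≤ (∑' t, |G t|) ^ n * CS := by
      intro t
      calc |s' t| ≤ ∑ u ∈ Finset.range (t + 1), |convPow G n (t - u)| * |s u| := by
            refine le_trans (Finset.abs_sum_le_sum_abs _ _) ?_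
            exact le_of_eq (Finset.sum_congr rfl fun u _ => abs_mul _ _)
        _ ≤ ∑ u ∈ Finset.range (t + 1), |convPow G n (t - u)| * CS :=
            Finset.sum_le_sum fun u _ => mul_le_mul_of_nonneg_left (hs_bd u) (abs_nonneg _)
        _ = (∑ u ∈ Finset.range (t + 1), |convPow G n (t - u)|) * CS := by
            rw [Finset.sum_mul]
        _ = (∑ d ∈ Finset.range (t + 1), |convPow G n d|) * CS := by
            rw [sumRangeReflectAux (fun u => |convPow G n u|) t]
        _ ≤ (∑' t, |G t|) ^ n * CS :=
            mul_le_mul_of_nonneg_right (convPow_abs_sum G hG n (t + 1)) hCS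
    have hconv : ∀ t, ∑ t' ∈ Finset.range (t + 1), convPow G (n + 1) (t - t') * s t'
        = ∑ t' ∈ Finset.range (t + 1), G (t - t') * s' t' := by
      intro t
      have hmks' : PowerSeries.mk (convPow G n) * PowerSeries.mk s = PowerSeries.mk s' := by
        ext u
        rw [coeff_mul_mk]
        simp [PowerSeries.coeff_mk, hs']
      have e1 : ∑ t' ∈ Finset.range (t + 1), convPow G (n + 1) (t - t') * s t'
          = PowerSeries.coeff t (PowerSeries.mk (convPow G (n + 1)) * PowerSeries.mk s) := by
        rw [coeff_mul_mk]
        simp [PowerSeries.coeff_mk]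
      have e2 : PowerSeries.mk (convPow G (n + 1)) * PowerSeries.mk s
          = PowerSeries.mk G * PowerSeries.mk s' := by
        rw [mk_convPow, pow_succ', mul_assoc, ← mk_convPow, hmks']
      rw [e1, e2, coeff_mul_mk]
      simp [PowerSeries.coeff_mk]
    have := cesaro_conv G k hG hGk s' _ hs'bd _ ih
    have hk : k * (k ^ n * sbar) = k ^ (n + 1) * sbar := by ring
    rw [hk] at this
    refine this.congr fun τ => ?_
    congr 1
    exact Finset.sum_congr rfl fun t _ => (hconv t).symm
end

section
/- Let x* be the unique positive solution of erf(x) = 2 − (1/(x√π)) e^{−x²}. Then the critical value α_c := erf(x*) satisfies 0.337 < α_c < 0.338. -/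
open Real

/-- The Gauss error function. -/
noncomputable def erf (x : ℝ) : ℝ :=
  (2 / Real.sqrt π) * ∫ u in (0:ℝ)..x, Real.exp (-u ^ 2)

namespace ErfAux

lemma cont : Continuous (fun u : ℝ => Real.exp (-u ^ 2)) := by fun_prop

lemma sqrt_pi_pos : 0 < Real.sqrt π := Real.sqrt_pos.mpr Real.pi_pos

lemma sqrt_pi_lo : (1.7724535 : ℝ) < Real.sqrt π := by
  nlinarith [Real.sq_sqrt Real.pi_pos.le, Real.sqrt_nonneg π, Real.pi_gt_d6]

lemma sqrt_pi_hi : Real.sqrt π < 1.7724541 := by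
  nlinarith [Real.sq_sqrt Real.pi_pos.le, Real.sqrt_nonneg π, Real.pi_lt_d6]

lemma intg_hasDerivAt (y : ℝ) :
    HasDerivAt (fun x : ℝ => ∫ u in (0:ℝ)..x, Real.exp (-u ^ 2)) (Real.exp (-y ^ 2)) y :=
  intervalIntegral.integral_hasDerivAt_right (cont.intervalIntegrable _ _)
    (cont.stronglyMeasurableAtFilter _ _) cont.continuousAt

lemma erf_hasDerivAt (y : ℝ) :
    HasDerivAt erf (2 / Real.sqrt π * Real.exp (-y ^ 2)) y :=
  (intg_hasDerivAt y).const_mul (2 / Real.sqrt π)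

lemma erf_strictMono : StrictMono erf := by
  apply strictMono_of_deriv_pos
  intro y
  rw [(erf_hasDerivAt y).deriv]
  have := sqrt_pi_pos
  positivity

/-- The auxiliary function whose unique zero-of-`g = 2` locates `x*`. -/
noncomputable def gfun (y : ℝ) : ℝ := erf y + 1 / (y * Real.sqrt π) * Real.exp (-y ^ 2)

lemma gfun_hasDerivAt {y : ℝ} (hy : 0 < y) :
    HasDerivAt gfun (-(Real.exp (-y ^ 2) / (Real.sqrt π * y ^ 2))) y := by
  have hs := sqrt_pi_pos
  have hne : y * Real.sqrt π ≠ 0 := by positivity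
  have hinner : HasDerivAt (fun x : ℝ => -x ^ 2) (-(2 * y)) y := by
    have := (hasDerivAt_pow 2 y).neg
    simpa [Pi.neg_def] using this
  have hexp := hinner.exp
  have hden : HasDerivAt (fun x : ℝ => x * Real.sqrt π) (1 * Real.sqrt π) y :=
    (hasDerivAt_id y).mul_const _
  have hdiv := hexp.div hden hne
  have hg := (erf_hasDerivAt y).add hdiv
  have heq : gfun = fun x => erf x + Real.exp (-x ^ 2) / (x * Real.sqrt π) := by
    funext x; rw [gfun, one_div_mul_eq_div]
  rw [heq]
  refine hg.congr_deriv ?_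
  field_simp
  ring

lemma gfun_anti : StrictAntiOn gfun (Set.Ioi 0) := by
  apply strictAntiOn_of_deriv_neg (convex_Ioi 0)
  · exact fun y hy => ((gfun_hasDerivAt hy).continuousAt).continuousWithinAt
  · intro y hy
    rw [interior_Ioi] at hy
    rw [(gfun_hasDerivAt hy).deriv]
    have hs := sqrt_pi_pos
    have hy0 : (0:ℝ) < y := hy
    have hyne : y ≠ 0 := ne_of_gt hy0
    have h : 0 < Real.exp (-y ^ 2) / (Real.sqrt π * y ^ 2) := by positivity
    linarith

lemma exp_sq_bounds {t : ℝ} (h0 : 0 ≤ t) (h1 : t ≤ 1) :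
    1 - t + t ^ 2 / 2 - t ^ 3 / 6 - 5 * t ^ 4 / 96 ≤ Real.exp (-t) ∧
      Real.exp (-t) ≤ 1 - t + t ^ 2 / 2 - t ^ 3 / 6 + 5 * t ^ 4 / 96 := by
  have habs : |(-t : ℝ)| ≤ 1 := by rw [abs_neg, abs_of_nonneg h0]; exact h1
  have hb := Real.exp_bound habs (n := 4) (by norm_num)
  rw [abs_neg, abs_of_nonneg h0] at hb
  norm_num [Finset.sum_range_succ, Nat.factorial] at hb
  obtain ⟨hb1, hb2⟩ := abs_le.mp hb
  constructor <;> nlinarith [hb1, hb2]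

lemma contPoly : Continuous (fun u : ℝ =>
    1 - u ^ 2 + u ^ 4 / 2 - u ^ 6 / 6 - 5 * u ^ 8 / 96) := by fun_prop

lemma contPoly' : Continuous (fun u : ℝ =>
    1 - u ^ 2 + u ^ 4 / 2 - u ^ 6 / 6 + 5 * u ^ 8 / 96) := by fun_prop

lemma poly_hasDeriv (s : ℝ) (u : ℝ) :
    HasDerivAt (fun x : ℝ => x - x ^ 3 / 3 + x ^ 5 / 10 - x ^ 7 / 42 + s * x ^ 9 / 864)
      (1 - u ^ 2 + u ^ 4 / 2 - u ^ 6 / 6 + s * u ^ 8 / 96) u := by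
  have h := ((((hasDerivAt_id u).sub ((hasDerivAt_pow 3 u).div_const 3)).add
      ((hasDerivAt_pow 5 u).div_const 10)).sub ((hasDerivAt_pow 7 u).div_const 42)).add
      (((hasDerivAt_pow 9 u).const_mul s).div_const 864)
  refine h.congr_deriv ?_
  norm_num
  ring

lemma poly_integral (s c : ℝ) :
    (∫ u in (0:ℝ)..c, (1 - u ^ 2 + u ^ 4 / 2 - u ^ 6 / 6 + s * u ^ 8 / 96)) =
      c - c ^ 3 / 3 + c ^ 5 / 10 - c ^ 7 / 42 + s * c ^ 9 / 864 := by
  have hcont : Continuous (fun u : ℝ =>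
      1 - u ^ 2 + u ^ 4 / 2 - u ^ 6 / 6 + s * u ^ 8 / 96) := by fun_prop
  rw [intervalIntegral.integral_eq_sub_of_hasDerivAt
      (fun u _ => poly_hasDeriv s u) (hcont.intervalIntegrable _ _)]
  norm_num

lemma erf_integral_lb {c : ℝ} (h0 : 0 ≤ c) (h1 : c ≤ 1) :
    c - c ^ 3 / 3 + c ^ 5 / 10 - c ^ 7 / 42 + (-5) * c ^ 9 / 864 ≤
      ∫ u in (0:ℝ)..c, Real.exp (-u ^ 2) := by
  rw [← poly_integral (-5) c]
  apply intervalIntegral.integral_mono_on h0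
    ((by fun_prop : Continuous (fun u : ℝ =>
      1 - u ^ 2 + u ^ 4 / 2 - u ^ 6 / 6 + (-5) * u ^ 8 / 96)).intervalIntegrable _ _)
    (cont.intervalIntegrable _ _)
  intro u hu
  have ht0 : (0:ℝ) ≤ u ^ 2 := sq_nonneg u
  have ht1 : u ^ 2 ≤ 1 := by nlinarith [hu.1, hu.2]
  have h := (exp_sq_bounds ht0 ht1).1
  refine le_trans (le_of_eq ?_) h
  ring

lemma erf_integral_ub {c : ℝ} (h0 : 0 ≤ c) (h1 : c ≤ 1) :
    (∫ u in (0:ℝ)..c, Real.exp (-u ^ 2)) ≤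
      c - c ^ 3 / 3 + c ^ 5 / 10 - c ^ 7 / 42 + 5 * c ^ 9 / 864 := by
  rw [← poly_integral 5 c]
  apply intervalIntegral.integral_mono_on h0 (cont.intervalIntegrable _ _)
    ((by fun_prop : Continuous (fun u : ℝ =>
      1 - u ^ 2 + u ^ 4 / 2 - u ^ 6 / 6 + 5 * u ^ 8 / 96)).intervalIntegrable _ _)
  intro u hu
  have ht0 : (0:ℝ) ≤ u ^ 2 := sq_nonneg u
  have ht1 : u ^ 2 ≤ 1 := by nlinarith [hu.1, hu.2]
  have h := (exp_sq_bounds ht0 ht1).2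
  refine le_trans h (le_of_eq ?_)
  ring

lemma erf_a_lb : (0.337 : ℝ) < erf 0.3083 := by
  have hI := erf_integral_lb (c := 0.3083) (by norm_num) (by norm_num)
  have hs2 := sqrt_pi_hi
  have hs0 := sqrt_pi_pos
  norm_num at hI
  rw [erf, div_mul_eq_mul_div, lt_div_iff₀ hs0]
  nlinarith [hI, hs2, hs0]

lemma erf_b_ub : erf 0.3088 < (0.338 : ℝ) := by
  have hI := erf_integral_ub (c := 0.3088) (by norm_num) (by norm_num)
  have hs1 := sqrt_pi_lo
  have hs0 := sqrt_pi_pos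
  norm_num at hI
  rw [erf, div_mul_eq_mul_div, div_lt_iff₀ hs0]
  nlinarith [hI, hs1, hs0]

lemma gfun_a_gt : (2 : ℝ) < gfun 0.3083 := by
  have hI := erf_integral_lb (c := 0.3083) (by norm_num) (by norm_num)
  have hE := (exp_sq_bounds (t := (0.3083 : ℝ) ^ 2) (by positivity) (by norm_num)).1
  have hs2 := sqrt_pi_hi
  have hs0 := sqrt_pi_pos
  norm_num at hI hE
  rw [gfun, erf]
  set s := Real.sqrt π
  set I := ∫ u in (0:ℝ)..(0.3083:ℝ), Real.exp (-u ^ 2) with hIdef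
  have hexpand : 2 / s * I + 1 / (0.3083 * s) * Real.exp (-(0.3083:ℝ) ^ 2)
      = (2 * 0.3083 * I + Real.exp (-(0.3083:ℝ) ^ 2)) / (0.3083 * s) := by
    field_simp
  rw [hexpand, lt_div_iff₀ (by positivity)]
  nlinarith [hI, hE, hs2]

lemma gfun_b_lt : gfun 0.3088 < (2 : ℝ) := by
  have hI := erf_integral_ub (c := 0.3088) (by norm_num) (by norm_num)
  have hE := (exp_sq_bounds (t := (0.3088 : ℝ) ^ 2) (by positivity) (by norm_num)).2
  have hs1 := sqrt_pi_lo
  have hs0 := sqrt_pi_pos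
  norm_num at hI hE
  rw [gfun, erf]
  set s := Real.sqrt π
  set I := ∫ u in (0:ℝ)..(0.3088:ℝ), Real.exp (-u ^ 2) with hIdef
  have hexpand : 2 / s * I + 1 / (0.3088 * s) * Real.exp (-(0.3088:ℝ) ^ 2)
      = (2 * 0.3088 * I + Real.exp (-(0.3088:ℝ) ^ 2)) / (0.3088 * s) := by
    field_simp
  rw [hexpand, div_lt_iff₀ (by positivity)]
  nlinarith [hI, hE, hs1]

end ErfAux

/-- Numerical bounds on the critical point `α_c = erf(x*) ≈ 0.33740` of the
batch minority game (Heimel–Coolen). -/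
theorem stmt_5 (x : ℝ) (hx : 0 < x)
    (heq : erf x = 2 - (1 / (x * Real.sqrt π)) * Real.exp (-x ^ 2)) :
    0.337 < erf x ∧ erf x < 0.338 := by
  have hgx : ErfAux.gfun x = 2 := by rw [ErfAux.gfun, heq]; ring
  have hxa : (0.3083 : ℝ) < x := by
    by_contra h
    push_neg at h
    rcases eq_or_lt_of_le h with h' | h'
    · rw [h'] at hgx
      linarith [ErfAux.gfun_a_gt]
    · have := ErfAux.gfun_anti hx (by norm_num : (0.3083:ℝ) ∈ Set.Ioi 0) h'
      linarith [ErfAux.gfun_a_gt]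
  have hxb : x < (0.3088 : ℝ) := by
    by_contra h
    push_neg at h
    rcases eq_or_lt_of_le h with h' | h'
    · rw [← h'] at hgx
      linarith [ErfAux.gfun_b_lt]
    · have := ErfAux.gfun_anti (by norm_num : (0.3088:ℝ) ∈ Set.Ioi 0) hx h'
      linarith [ErfAux.gfun_b_lt]
  constructor
  · calc (0.337 : ℝ) < erf 0.3083 := ErfAux.erf_a_lb
      _ < erf x := ErfAux.erf_strictMono hxa
  · calc erf x < erf 0.3088 := ErfAux.erf_strictMono hxb
      _ < 0.338 := ErfAux.erf_b_ub
end

section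
/- Suppose c = c(α) ∈ [0,1] solves c = 1 − (1 − (1+c)/α)·erf(√(α/(2(1+c)))) − 2·√((1+c)/(2πα))·e^{−α/(2(1+c))} for each α > 0. Then c(α) → 0 as α → ∞; in fact α·c(α) remains bounded as α → ∞. -/
open Real Filter

open MeasureTheory in
lemma gauss_integrable : Integrable (fun u : ℝ => Real.exp (-u ^ 2)) := by
  simpa using integrable_exp_neg_mul_sq (one_pos)

open MeasureTheory in
lemma gauss_split (x : ℝ) (hx : 0 ≤ x) :
    (∫ u in (0:ℝ)..x, Real.exp (-u ^ 2))
      = Real.sqrt π / 2 - ∫ u in Set.Ioi x, Real.exp (-u ^ 2) := by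
  have h1 : (∫ u in Set.Ioi (0:ℝ), Real.exp (-u ^ 2)) = Real.sqrt π / 2 := by
    simpa using integral_gaussian_Ioi 1
  have h2 : (∫ u in Set.Ioc (0:ℝ) x, Real.exp (-u ^ 2))
      + ∫ u in Set.Ioi x, Real.exp (-u ^ 2)
      = ∫ u in Set.Ioi (0:ℝ), Real.exp (-u ^ 2) := by
    rw [← setIntegral_union (Set.Ioc_disjoint_Ioi le_rfl) measurableSet_Ioi
      gauss_integrable.integrableOn gauss_integrable.integrableOn,
      Set.Ioc_union_Ioi_eq_Ioi hx]
  rw [intervalIntegral.integral_of_le hx]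
  linarith

open MeasureTheory in
lemma gauss_tail_le (x : ℝ) (hx : 0 ≤ x) :
    (∫ u in Set.Ioi x, Real.exp (-u ^ 2))
      ≤ Real.exp (-x ^ 2) * (Real.sqrt π / 2) := by
  have hshift : (∫ u in Set.Ioi x, Real.exp (-(u - x) ^ 2)) = Real.sqrt π / 2 := by
    have h := (measurePreserving_add_right volume x).setIntegral_preimage_emb
      (MeasurableEquiv.addRight x).measurableEmbedding
      (fun u => Real.exp (-(u - x) ^ 2)) (Set.Ioi x)
    have hpre : ((· + x) : ℝ → ℝ) ⁻¹' Set.Ioi x = Set.Ioi 0 := by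
      ext v; simp
    rw [hpre] at h
    simp only [add_sub_cancel_right] at h
    rw [← h]
    simpa using integral_gaussian_Ioi 1
  have hint1 : Integrable (fun u : ℝ => Real.exp (-(u - x) ^ 2)) := by
    have := gauss_integrable.comp_sub_right x
    simpa using this
  have hint2 : IntegrableOn (fun u : ℝ => Real.exp (-x ^ 2) * Real.exp (-(u - x) ^ 2))
      (Set.Ioi x) :=
    (hint1.const_mul _).integrableOn
  have key : (∫ u in Set.Ioi x, Real.exp (-u ^ 2))
      ≤ ∫ u in Set.Ioi x, Real.exp (-x ^ 2) * Real.exp (-(u - x) ^ 2) := by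
    apply setIntegral_mono_on gauss_integrable.integrableOn hint2 measurableSet_Ioi
    intro u hu
    rw [← Real.exp_add]
    apply Real.exp_le_exp.mpr
    have hxu : x < u := hu
    nlinarith
  calc (∫ u in Set.Ioi x, Real.exp (-u ^ 2))
      ≤ ∫ u in Set.Ioi x, Real.exp (-x ^ 2) * Real.exp (-(u - x) ^ 2) := key
    _ = Real.exp (-x ^ 2) * ∫ u in Set.Ioi x, Real.exp (-(u - x) ^ 2) := by
        rw [integral_const_mul]
    _ = Real.exp (-x ^ 2) * (Real.sqrt π / 2) := by rw [hshift]

open MeasureTheory in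
lemma erf_bounds (x : ℝ) (hx : 0 ≤ x) :
    erf x ≤ 1 ∧ 1 - erf x ≤ Real.exp (-x ^ 2) ∧ 0 ≤ erf x := by
  have hπ : 0 < Real.sqrt π := Real.sqrt_pos.mpr Real.pi_pos
  have htail_nonneg : 0 ≤ ∫ u in Set.Ioi x, Real.exp (-u ^ 2) :=
    setIntegral_nonneg measurableSet_Ioi (fun u _ => (Real.exp_pos _).le)
  have htail := gauss_tail_le x hx
  have herf : erf x = 1 - (2 / Real.sqrt π) * ∫ u in Set.Ioi x, Real.exp (-u ^ 2) := by
    rw [erf, gauss_split x hx]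
    field_simp
  refine ⟨?_, ?_, ?_⟩
  · rw [herf]
    have : 0 ≤ (2 / Real.sqrt π) * ∫ u in Set.Ioi x, Real.exp (-u ^ 2) :=
      mul_nonneg (by positivity) htail_nonneg
    linarith
  · rw [herf]
    have h2 : (2 / Real.sqrt π) * (∫ u in Set.Ioi x, Real.exp (-u ^ 2))
        ≤ (2 / Real.sqrt π) * (Real.exp (-x ^ 2) * (Real.sqrt π / 2)) :=
      mul_le_mul_of_nonneg_left htail (by positivity)
    have h3 : (2 / Real.sqrt π) * (Real.exp (-x ^ 2) * (Real.sqrt π / 2))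
        = Real.exp (-x ^ 2) := by field_simp
    linarith
  · rw [erf]
    apply mul_nonneg (by positivity)
    apply intervalIntegral.integral_nonneg hx
    intro u _; exact (Real.exp_pos _).le

/-- Large-`α` behaviour of the persistent correlation `c(α)` of the batch
minority game: `c(α) → 0` and `α·c(α)` stays bounded as `α → ∞`. -/
theorem stmt_6 (c : ℝ → ℝ)
    (hc : ∀ α, 0 < α → c α ∈ Set.Icc (0:ℝ) 1 ∧
      c α = 1 - (1 - (1 + c α) / α) * erf (Real.sqrt (α / (2 * (1 + c α))))
        - 2 * Real.sqrt ((1 + c α) / (2 * π * α)) * Real.exp (-α / (2 * (1 + c α)))) :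
    Tendsto c atTop (nhds 0) ∧
      ∃ M A : ℝ, ∀ α, A ≤ α → |α * c α| ≤ M := by
  have key : ∀ α : ℝ, 0 < α → c α ≤ Real.exp (-α / 4) + 2 / α := by
    intro α hα
    obtain ⟨⟨hb0, hb1⟩, heq⟩ := hc α hα
    set b := c α with hbdef
    have h1b : (1:ℝ) ≤ 1 + b := by linarith
    have h2b : 1 + b ≤ 2 := by linarith
    set x := Real.sqrt (α / (2 * (1 + b))) with hxdef
    have hxnn : 0 ≤ x := Real.sqrt_nonneg _
    have hx2 : x ^ 2 = α / (2 * (1 + b)) := by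
      rw [hxdef, Real.sq_sqrt]; positivity
    obtain ⟨he1, he2, he0⟩ := erf_bounds x hxnn
    have hG : 0 ≤ 2 * Real.sqrt ((1 + b) / (2 * π * α)) * Real.exp (-α / (2 * (1 + b))) := by
      positivity
    have hstep : b ≤ (1 - erf x) + ((1 + b) / α) * erf x := by
      have hb' : b = (1 - erf x) + ((1 + b) / α) * erf x
          - 2 * Real.sqrt ((1 + b) / (2 * π * α)) * Real.exp (-α / (2 * (1 + b))) := by
        linear_combination heq
      linarith
    have hterm : ((1 + b) / α) * erf x ≤ 2 / α := by
      have ht1 : ((1 + b) / α) * erf x ≤ (1 + b) / α :=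
        mul_le_of_le_one_right (by positivity) he1
      have ht2 : (1 + b) / α ≤ 2 / α := by gcongr
      linarith
    have htail : 1 - erf x ≤ Real.exp (-α / 4) := by
      have hle : Real.exp (-x ^ 2) ≤ Real.exp (-α / 4) := by
        apply Real.exp_le_exp.mpr
        rw [hx2]
        have : α / 4 ≤ α / (2 * (1 + b)) := by
          apply div_le_div_of_nonneg_left hα.le (by positivity) (by linarith)
        linarith
      linarith
    linarith
  have hexp : ∀ α : ℝ, 64 ≤ α → α * Real.exp (-α / 4) ≤ 1 := by
    intro α hα64
    have hα : (0:ℝ) < α := by linarith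
    have h1 : 1 + α / 8 ≤ Real.exp (α / 8) := by
      have := Real.add_one_le_exp (α / 8); linarith
    have h2 : (1 + α / 8) ^ 2 ≤ Real.exp (α / 8) ^ 2 :=
      pow_le_pow_left₀ (by positivity) h1 2
    have h3 : Real.exp (α / 8) ^ 2 = Real.exp (α / 4) := by
      rw [← Real.exp_nat_mul]; congr 1; push_cast; ring
    have h4 : α ≤ Real.exp (α / 4) := by nlinarith
    have hpos : (0:ℝ) < Real.exp (α / 4) := Real.exp_pos _
    rw [neg_div, Real.exp_neg]
    calc α * (Real.exp (α / 4))⁻¹ ≤ Real.exp (α / 4) * (Real.exp (α / 4))⁻¹ := by gcongr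
      _ = 1 := mul_inv_cancel₀ (ne_of_gt hpos)
  have hbound : ∀ α : ℝ, 64 ≤ α → |α * c α| ≤ 3 := by
    intro α hα64
    have hα : (0:ℝ) < α := by linarith
    have hc0 : 0 ≤ c α := ((hc α hα).1).1
    rw [abs_of_nonneg (mul_nonneg hα.le hc0)]
    have h5 : α * c α ≤ α * (Real.exp (-α / 4) + 2 / α) :=
      mul_le_mul_of_nonneg_left (key α hα) hα.le
    have h6 : α * (Real.exp (-α / 4) + 2 / α) = α * Real.exp (-α / 4) + 2 := by
      field_simp
    have := hexp α hα64
    linarith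
  constructor
  · have hh : Tendsto (fun α : ℝ => Real.exp (-α / 4) + 2 / α) atTop (nhds 0) := by
      have h1 : Tendsto (fun α : ℝ => Real.exp (-α / 4)) atTop (nhds 0) := by
        apply Real.tendsto_exp_atBot.comp
        apply Tendsto.atBot_div_const (by norm_num : (0:ℝ) < 4)
        exact tendsto_neg_atTop_atBot
      have h2 : Tendsto (fun α : ℝ => 2 / α) atTop (nhds 0) :=
        Tendsto.div_atTop tendsto_const_nhds tendsto_id
      simpa using h1.add h2
    apply tendsto_of_tendsto_of_tendsto_of_le_of_le' (tendsto_const_nhds (x := (0:ℝ))) hh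
    · filter_upwards [eventually_gt_atTop (0:ℝ)] with α hα
      exact ((hc α hα).1).1
    · filter_upwards [eventually_gt_atTop (0:ℝ)] with α hα
      exact key α hα
  · exact ⟨3, 64, hbound⟩
end

section
/- Let η be a centered Gaussian random variable with variance v = (1+c)/(1+k)² where c ∈ [0,1], k > −1, and α > 0. Define s = sgn(η) when |η| > √α/(1+k) and s = (1+k)η/√α when |η| ≤ √α/(1+k). Then E[s²] = 1 − (1 − (1+c)/α)·erf(√(α/(2(1+c)))) − 2√((1+c)/(2πα))·e^{−α/(2(1+c))}. -/
open Real MeasureTheory ProbabilityTheory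

lemma even_int (f : ℝ → ℝ) (hc : Continuous f) (hf : ∀ x, f (-x) = f x) (a : ℝ) :
    ∫ x in (-a)..a, f x = 2 * ∫ x in (0:ℝ)..a, f x := by
  have h1 : ∫ x in (0:ℝ)..a, f (-x) = ∫ x in (-a)..(-0:ℝ), f x :=
    intervalIntegral.integral_comp_neg f
  simp only [hf, neg_zero] at h1
  have h2 := intervalIntegral.integral_add_adjacent_intervals
    (μ := volume) (a := -a) (b := 0) (c := a) (f := f)
    (hc.intervalIntegrable (-a) 0) (hc.intervalIntegrable 0 a)
  rw [← h2, ← h1]; ring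

lemma antider (V b : ℝ) (hV : 0 < V) :
    ∫ x in (-b)..b, (V - x ^ 2) * Real.exp (-x ^ 2 / (2 * V)) =
      2 * V * b * Real.exp (-b ^ 2 / (2 * V)) := by
  have key : ∀ x : ℝ, HasDerivAt (fun x => V * x * Real.exp (-x ^ 2 / (2 * V)))
      ((V - x ^ 2) * Real.exp (-x ^ 2 / (2 * V))) x := by
    intro x
    have h1 : HasDerivAt (fun x : ℝ => -x ^ 2 / (2 * V)) (-x / V) x := by
      have := ((hasDerivAt_pow 2 x).neg).div_const (2 * V)
      refine this.congr_deriv ?_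
      field_simp; ring
    have h3 := ((hasDerivAt_id x).const_mul V).mul h1.exp
    refine h3.congr_deriv ?_
    field_simp
    simp only [id]; ring
  rw [intervalIntegral.integral_eq_sub_of_hasDerivAt (fun x _ => key x) (by
    apply Continuous.intervalIntegrable; fun_prop)]
  ring_nf

lemma scaling (V b : ℝ) (hV : 0 < V) :
    ∫ x in (-b)..b, Real.exp (-x ^ 2 / (2 * V)) =
      Real.sqrt (2 * V) * ∫ u in (-(b / Real.sqrt (2 * V)))..(b / Real.sqrt (2 * V)),
        Real.exp (-u ^ 2) := by
  have h2V : (0:ℝ) < 2 * V := by linarith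
  have hs : (0:ℝ) < Real.sqrt (2 * V) := Real.sqrt_pos.mpr h2V
  have key : ∀ x : ℝ, Real.exp (-x ^ 2 / (2 * V)) = Real.exp (-(x / Real.sqrt (2 * V)) ^ 2) := by
    intro x
    rw [div_pow, Real.sq_sqrt h2V.le]
    ring_nf
  simp_rw [key]
  rw [intervalIntegral.integral_comp_div (fun u => Real.exp (-u ^ 2)) hs.ne']
  rw [neg_div]
  simp [smul_eq_mul]

lemma gauss_int (μ : ℝ) (v : NNReal) (hv : v ≠ 0) (g : ℝ → ℝ) :
    ∫ x, g x ∂(gaussianReal μ v) = ∫ x, gaussianPDFReal μ v x * g x := by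
  rw [gaussianReal_of_var_ne_zero _ hv]
  have heq : gaussianPDF μ v
      = fun x => ((Real.toNNReal (gaussianPDFReal μ v x) : NNReal) : ENNReal) := rfl
  rw [heq, integral_withDensity_eq_integral_smul
    ((measurable_gaussianPDFReal μ v).real_toNNReal) g]
  congr 1; ext x
  rw [NNReal.smul_def, smul_eq_mul, Real.coe_toNNReal _ (gaussianPDFReal_nonneg _ _ _)]

/-- Derivation of the self-consistency equation (26) of Heimel–Coolen:
the second moment of the stationary effective strategy `s` under the
Gaussian noise `η ~ N(0, (1+c)/(1+k)²)`. -/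
theorem stmt_13 (c k α : ℝ) (hc : c ∈ Set.Icc (0:ℝ) 1) (hk : -1 < k)
    (hα : 0 < α) (v : NNReal) (hv : (v : ℝ) = (1 + c) / (1 + k) ^ 2)
    (s : ℝ → ℝ)
    (hs : ∀ x : ℝ, s x =
      if Real.sqrt α / (1 + k) < |x| then Real.sign x
      else (1 + k) * x / Real.sqrt α) :
    ∫ x, (s x) ^ 2 ∂(gaussianReal 0 v) =
      1 - (1 - (1 + c) / α) * erf (Real.sqrt (α / (2 * (1 + c))))
        - 2 * Real.sqrt ((1 + c) / (2 * π * α)) * Real.exp (-α / (2 * (1 + c))) := by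
  obtain ⟨hc0, hc1⟩ := hc
  set K : ℝ := 1 + k with hK
  have hKpos : 0 < K := by simp [hK]; linarith
  have h1c : (0:ℝ) < 1 + c := by linarith
  have hV : (0:ℝ) < (v:ℝ) := by rw [hv]; positivity
  have hv0 : v ≠ 0 := by
    intro h; rw [h] at hV; simp at hV
  set V : ℝ := (v:ℝ) with hVdef
  set b : ℝ := Real.sqrt α / K with hb
  have hbpos : 0 < b := by positivity
  set β : ℝ := K ^ 2 / α with hβ
  -- pointwise identity for s ^ 2
  have hpt : ∀ x : ℝ, s x ^ 2
      = 1 - Set.indicator (Set.Icc (-b) b) (fun x => 1 - β * x ^ 2) x := by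
    intro x
    rw [hs x]
    by_cases hx : b < |x|
    · rw [if_pos hx, Set.indicator_of_notMem]
      · have hx0 : x ≠ 0 := by
          intro h; rw [h] at hx; simp at hx; linarith
        rcases hx0.lt_or_gt with h | h
        · rw [Real.sign_of_neg h]; ring
        · rw [Real.sign_of_pos h]; ring
      · rw [Set.mem_Icc, ← abs_le]; exact not_le.mpr hx
    · rw [if_neg hx, Set.indicator_of_mem]
      · rw [div_pow, mul_pow, Real.sq_sqrt hα.le]
        rw [hβ]; ring
      · rw [Set.mem_Icc, ← abs_le]; exact not_lt.mp hx
  -- move to Lebesgue integral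
  rw [show (fun x => s x ^ 2) = fun x => s x ^ 2 from rfl] at *
  have := gauss_int 0 v hv0 (fun x => s x ^ 2)
  rw [this]
  simp_rw [hpt]
  set pdf : ℝ → ℝ := gaussianPDFReal 0 v with hpdf
  have hpdf_cont : Continuous pdf := by
    rw [hpdf]
    unfold gaussianPDFReal
    fun_prop
  have hpdf_int : Integrable pdf := integrable_gaussianPDFReal 0 v
  -- indicator form
  have hind : (fun x => pdf x * Set.indicator (Set.Icc (-b) b) (fun x => 1 - β * x ^ 2) x)
      = Set.indicator (Set.Icc (-b) b) (fun x => pdf x * (1 - β * x ^ 2)) := by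
    funext x
    by_cases hx : x ∈ Set.Icc (-b) b
    · rw [Set.indicator_of_mem hx, Set.indicator_of_mem hx]
    · rw [Set.indicator_of_notMem hx, Set.indicator_of_notMem hx, mul_zero]
  have hind_int : Integrable
      (Set.indicator (Set.Icc (-b) b) (fun x => pdf x * (1 - β * x ^ 2))) := by
    apply (IntegrableOn.integrable_indicator ?_ measurableSet_Icc)
    exact ((hpdf_cont.mul (by fun_prop)).continuousOn).integrableOn_compact isCompact_Icc
  have split : ∫ x, pdf x * (1 - Set.indicator (Set.Icc (-b) b) (fun x => 1 - β * x ^ 2) x)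
      = (∫ x, pdf x) - ∫ x, Set.indicator (Set.Icc (-b) b)
          (fun x => pdf x * (1 - β * x ^ 2)) x := by
    have : (fun x => pdf x * (1 - Set.indicator (Set.Icc (-b) b) (fun x => 1 - β * x ^ 2) x))
        = fun x => pdf x - Set.indicator (Set.Icc (-b) b) (fun x => pdf x * (1 - β * x ^ 2)) x := by
      funext x
      rw [mul_sub, mul_one, ← hind]
    rw [this, integral_sub hpdf_int hind_int]
  rw [split, integral_gaussianPDFReal_eq_one 0 hv0]
  -- to interval integral
  rw [integral_indicator measurableSet_Icc, integral_Icc_eq_integral_Ioc,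
    ← intervalIntegral.integral_of_le (by linarith : -b ≤ b)]
  -- expand pdf inside
  set C : ℝ := (Real.sqrt (2 * π * V))⁻¹ with hC
  have hpdf_eq : ∀ x : ℝ, pdf x = C * Real.exp (-x ^ 2 / (2 * V)) := by
    intro x
    rw [hpdf]
    unfold gaussianPDFReal
    rw [sub_zero]
  have hexp_cont : Continuous (fun x : ℝ => Real.exp (-x ^ 2 / (2 * V))) := by fun_prop
  have key : ∫ x in (-b)..b, pdf x * (1 - β * x ^ 2)
      = (C * (1 - β * V)) * (∫ x in (-b)..b, Real.exp (-x ^ 2 / (2 * V)))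
        + (C * β) * (2 * V * b * Real.exp (-b ^ 2 / (2 * V))) := by
    have e1 : ∫ x in (-b)..b, pdf x * (1 - β * x ^ 2)
        = ∫ x in (-b)..b, ((C * (1 - β * V)) * Real.exp (-x ^ 2 / (2 * V))
            + (C * β) * ((V - x ^ 2) * Real.exp (-x ^ 2 / (2 * V)))) := by
      apply intervalIntegral.integral_congr
      intro x _
      simp only [hpdf_eq x]
      ring
    rw [e1, intervalIntegral.integral_add (f := fun x => C * (1 - β * V) * Real.exp (-x ^ 2 / (2 * V))) (g := fun x => C * β * ((V - x ^ 2) * Real.exp (-x ^ 2 / (2 * V))))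
      ((continuous_const.mul hexp_cont).intervalIntegrable _ _)
      ((continuous_const.mul (by fun_prop : Continuous fun x : ℝ => (V - x ^ 2) * Real.exp (-x ^ 2 / (2 * V)))).intervalIntegrable _ _),
      intervalIntegral.integral_const_mul, intervalIntegral.integral_const_mul,
      antider V b hV]
  rw [key]
  set a' : ℝ := b / Real.sqrt (2 * V) with ha'
  rw [scaling V b hV,
    even_int (fun u => Real.exp (-u ^ 2)) (by fun_prop) (fun x => by norm_num) a']
  -- constants
  have hKne : K ≠ 0 := hKpos.ne'
  have h2Vpos : (0:ℝ) < 2 * V := by linarith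
  have hs2V : (0:ℝ) < Real.sqrt (2 * V) := Real.sqrt_pos.mpr h2Vpos
  have hsqrt2V : Real.sqrt (2 * V) = Real.sqrt (2 * (1 + c)) / K := by
    rw [hv, show 2 * ((1 + c) / K ^ 2) = (2 * (1 + c)) / K ^ 2 by ring,
      Real.sqrt_div (by positivity), Real.sqrt_sq hKpos.le]
  have h1 : β * V = (1 + c) / α := by
    rw [hβ, hv]; field_simp
  have hb2 : b ^ 2 = α / K ^ 2 := by
    rw [hb, div_pow, Real.sq_sqrt hα.le]
  have h3 : -b ^ 2 / (2 * V) = -α / (2 * (1 + c)) := by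
    rw [hb2, hv]
    rw [div_eq_div_iff (by positivity) (by positivity)]
    field_simp
  have h2 : a' = Real.sqrt (α / (2 * (1 + c))) := by
    rw [ha', hb, hsqrt2V, Real.sqrt_div hα.le]
    have : Real.sqrt (2 * (1 + c)) ≠ 0 := by positivity
    field_simp
  have hsplitpi : Real.sqrt (2 * π * V) = Real.sqrt π * Real.sqrt (2 * V) := by
    rw [show 2 * π * V = π * (2 * V) by ring, Real.sqrt_mul pi_pos.le]
  have h4 : C * Real.sqrt (2 * V) = (Real.sqrt π)⁻¹ := by
    rw [hC, hsplitpi, mul_inv, mul_assoc, inv_mul_cancel₀ hs2V.ne']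
    rw [mul_one]
  have hCpos : 0 < C := by
    rw [hC]
    exact inv_pos.mpr (Real.sqrt_pos.mpr (by positivity))
  have hβpos : 0 < β := by rw [hβ]; positivity
  have hC2 : C ^ 2 = (2 * π * V)⁻¹ := by
    rw [hC, ← Real.sqrt_inv, Real.sq_sqrt (by positivity)]
  have h5 : C * β * (2 * V * b) = 2 * Real.sqrt ((1 + c) / (2 * π * α)) := by
    have hsq : (C * β * (2 * V * b)) ^ 2 = 4 * ((1 + c) / (2 * π * α)) := by
      have e : (C * β * (2 * V * b)) ^ 2 = C ^ 2 * β ^ 2 * 4 * V ^ 2 * b ^ 2 := by ring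
      rw [e, hC2, hb2, hβ, hv]
      field_simp
    have hL : 0 ≤ C * β * (2 * V * b) := by
      have : 0 < 2 * V * b := mul_pos (mul_pos two_pos hV) hbpos
      positivity
    calc C * β * (2 * V * b) = Real.sqrt ((C * β * (2 * V * b)) ^ 2) :=
          (Real.sqrt_sq hL).symm
      _ = Real.sqrt (2 ^ 2 * ((1 + c) / (2 * π * α))) := by rw [hsq]; norm_num
      _ = 2 * Real.sqrt ((1 + c) / (2 * π * α)) := by
          rw [Real.sqrt_mul (by positivity), Real.sqrt_sq (by norm_num)]
  -- finish
  rw [← h2, erf, h3, ← h1]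
  linear_combination (-(2 * (1 - β * V) * (∫ u in (0:ℝ)..a', Real.exp (-u ^ 2)))) * h4
    - Real.exp (-α / (2 * (1 + c))) * h5
end

section
/- Let η be a centered Gaussian with variance v = (1+c)/(1+k)², c ∈ [0,1], k > −1, α > 0, and let s = sgn(η) if |η| > √α/(1+k), s = (1+k)η/√α otherwise. Then E[s·η] = ((1+c)/((1+k)√α))·erf(√(α/(2(1+c)))). -/
open Real MeasureTheory ProbabilityTheory

lemma aux_red (v : NNReal) (hv : v ≠ 0) (f : ℝ → ℝ) :
    ∫ x, f x ∂(gaussianReal 0 v) = ∫ x, gaussianPDFReal 0 v x * f x := by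
  rw [gaussianReal_of_var_ne_zero 0 hv]
  have h : gaussianPDF 0 v = fun x => ((Real.toNNReal (gaussianPDFReal 0 v x) : NNReal) : ENNReal) :=
    rfl
  rw [h, integral_withDensity_eq_integral_smul ((measurable_gaussianPDFReal 0 v).real_toNNReal) f]
  congr 1; ext x
  rw [NNReal.smul_def, Real.coe_toNNReal _ (gaussianPDFReal_nonneg 0 v x), smul_eq_mul]

lemma aux_sign_meas : Measurable Real.sign := by
  have h : Real.sign = fun r : ℝ => if r < 0 then (-1:ℝ) else if 0 < r then 1 else 0 :=
    funext fun r => rfl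
  rw [h]
  exact Measurable.ite (measurableSet_lt measurable_id measurable_const) measurable_const
    (Measurable.ite (measurableSet_lt measurable_const measurable_id) measurable_const
      measurable_const)

lemma aux_tail {b v θ : ℝ} (hb : 0 < b) (h2bv : 2 * b * v = 1) :
    ∫ x in Set.Ioi θ, x * Real.exp (-b * x ^ 2) = v * Real.exp (-b * θ ^ 2) := by
  have hderiv : ∀ x ∈ Set.Ici θ,
      HasDerivAt (fun x => -v * Real.exp (-b * x ^ 2)) (x * Real.exp (-b * x ^ 2)) x := by
    intro x _
    have h1 : HasDerivAt (fun x : ℝ => -b * x ^ 2) (-b * (2 * x ^ 1)) x :=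
      (hasDerivAt_pow 2 x).const_mul (-b)
    have h2 := (h1.exp).const_mul (-v)
    refine h2.congr_deriv ?_
    have : -v * (Real.exp (-b * x ^ 2) * (-b * (2 * x ^ 1))) =
        (2 * b * v) * (x * Real.exp (-b * x ^ 2)) := by ring
    rw [this, h2bv, one_mul]
  have htend : Filter.Tendsto (fun x => -v * Real.exp (-b * x ^ 2)) Filter.atTop (nhds 0) := by
    have h1 : Filter.Tendsto (fun x : ℝ => -b * x ^ 2) Filter.atTop Filter.atBot :=
      Filter.tendsto_neg_const_mul_pow_atTop (by norm_num) (by linarith)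
    have h2 := (Real.tendsto_exp_atBot.comp h1).const_mul (-v)
    simpa using h2
  rw [integral_Ioi_of_hasDerivAt_of_tendsto' hderiv
    ((integrable_mul_exp_neg_mul_sq hb).integrableOn) htend]
  ring

lemma aux_mid {b v θ : ℝ} (h2bv : 2 * b * v = 1) :
    ∫ x in (-θ)..θ, x ^ 2 * Real.exp (-b * x ^ 2) =
      v * (∫ x in (-θ)..θ, Real.exp (-b * x ^ 2)) - 2 * v * θ * Real.exp (-b * θ ^ 2) := by
  have hEc : Continuous fun x : ℝ => Real.exp (-b * x ^ 2) := by continuity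
  have hsub : ∫ x in (-θ)..θ,
      (x ^ 2 * Real.exp (-b * x ^ 2) - v * Real.exp (-b * x ^ 2)) =
      -(2 * v * θ * Real.exp (-b * θ ^ 2)) := by
    have hderiv : ∀ x ∈ Set.uIcc (-θ) θ,
        HasDerivAt (fun x => -v * x * Real.exp (-b * x ^ 2))
          (x ^ 2 * Real.exp (-b * x ^ 2) - v * Real.exp (-b * x ^ 2)) x := by
      intro x _
      have h1 : HasDerivAt (fun x : ℝ => -b * x ^ 2) (-b * (2 * x ^ 1)) x :=
        (hasDerivAt_pow 2 x).const_mul (-b)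
      have h2 : HasDerivAt (fun x : ℝ => x * Real.exp (-b * x ^ 2))
          (1 * Real.exp (-b * x ^ 2) + x * (Real.exp (-b * x ^ 2) * (-b * (2 * x ^ 1)))) x :=
        (hasDerivAt_id x).mul h1.exp
      have h3 : HasDerivAt (fun x : ℝ => -v * (x * Real.exp (-b * x ^ 2)))
          (-v * (1 * Real.exp (-b * x ^ 2) + x * (Real.exp (-b * x ^ 2) * (-b * (2 * x ^ 1))))) x :=
        h2.const_mul (-v)
      have heq1 : (fun x : ℝ => -v * (x * Real.exp (-b * x ^ 2))) =
          fun x : ℝ => -v * x * Real.exp (-b * x ^ 2) := by funext y; ring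
      rw [heq1] at h3
      convert h3 using 1
      have heq2 : -v * (1 * Real.exp (-b * x ^ 2) +
          x * (Real.exp (-b * x ^ 2) * (-b * (2 * x ^ 1)))) =
          (2 * b * v) * (x ^ 2 * Real.exp (-b * x ^ 2)) - v * Real.exp (-b * x ^ 2) := by ring
      rw [heq2, h2bv, one_mul]
    have hint : IntervalIntegrable
        (fun x => x ^ 2 * Real.exp (-b * x ^ 2) - v * Real.exp (-b * x ^ 2)) volume (-θ) θ := by
      apply Continuous.intervalIntegrable; continuity
    rw [intervalIntegral.integral_eq_sub_of_hasDerivAt hderiv hint]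
    simp [neg_sq]; ring
  have hi1 : IntervalIntegrable (fun x => x ^ 2 * Real.exp (-b * x ^ 2)) volume (-θ) θ := by
    apply Continuous.intervalIntegrable; continuity
  have hi2 : IntervalIntegrable (fun x => v * Real.exp (-b * x ^ 2)) volume (-θ) θ :=
    (continuous_const.mul hEc).intervalIntegrable _ _
  rw [intervalIntegral.integral_sub hi1 hi2, intervalIntegral.integral_const_mul] at hsub
  linarith

lemma aux_even (m : ℝ) : ∫ u in (-m)..m, Real.exp (-u ^ 2) =
    2 * ∫ u in (0:ℝ)..m, Real.exp (-u ^ 2) := by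
  have hc : Continuous fun u : ℝ => Real.exp (-u ^ 2) := by continuity
  have h1 : ∫ u in (-m)..(0:ℝ), Real.exp (-u ^ 2) = ∫ u in (0:ℝ)..m, Real.exp (-u ^ 2) := by
    have := intervalIntegral.integral_comp_neg (a := 0) (b := m) (fun u => Real.exp (-u ^ 2))
    simp only [neg_sq, neg_zero] at this
    exact this.symm
  have h2 := intervalIntegral.integral_add_adjacent_intervals (μ := volume)
    (hc.intervalIntegrable (-m) 0) (hc.intervalIntegrable 0 m)
  rw [← h2, h1]; ring

/-- The correlation `E[s·η]` between the stationary effective strategy and the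
Gaussian noise `η ~ N(0, (1+c)/(1+k)²)` (Heimel–Coolen, derivation of
Eq. (29)). -/
theorem stmt_14 (c k α : ℝ) (hc : c ∈ Set.Icc (0:ℝ) 1) (hk : -1 < k)
    (hα : 0 < α) (v : NNReal) (hv : (v : ℝ) = (1 + c) / (1 + k) ^ 2)
    (s : ℝ → ℝ)
    (hs : ∀ x : ℝ, s x =
      if Real.sqrt α / (1 + k) < |x| then Real.sign x
      else (1 + k) * x / Real.sqrt α) :
    ∫ x, s x * x ∂(gaussianReal 0 v) =
      ((1 + c) / ((1 + k) * Real.sqrt α)) * erf (Real.sqrt (α / (2 * (1 + c)))) := by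
  obtain ⟨hc0, hc1⟩ := hc
  have hk' : (0:ℝ) < 1 + k := by linarith
  have hcp : (0:ℝ) < 1 + c := by linarith
  have hsa : 0 < Real.sqrt α := Real.sqrt_pos.mpr hα
  set θ : ℝ := Real.sqrt α / (1 + k) with hθdef
  have hθ : 0 < θ := div_pos hsa hk'
  have hv0 : 0 < (v:ℝ) := by rw [hv]; positivity
  have hvne : v ≠ 0 := fun h => by simp [h] at hv0
  set b : ℝ := (2 * (v:ℝ))⁻¹ with hbdef
  have hb : 0 < b := by positivity
  have h2bv : 2 * b * (v:ℝ) = 1 := by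
    rw [hbdef]; field_simp
  -- simplify s
  have hsx : ∀ x, s x = if θ < |x| then Real.sign x else x / θ := by
    intro x
    rw [hs x]
    by_cases hx : θ < |x|
    · rw [if_pos hx, if_pos hx]
    · rw [if_neg hx, if_neg hx, hθdef]
      rw [div_div_eq_mul_div, mul_comm]
  set E : ℝ → ℝ := fun x => Real.exp (-b * x ^ 2) with hEdef
  have hEc : Continuous E := by rw [hEdef]; continuity
  set g : ℝ → ℝ := fun x => s x * x * E x with hgdef
  -- measurability and integrability of g
  have hsm : Measurable s := by
    have h : s = fun x => if θ < |x| then Real.sign x else x / θ := funext hsx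
    rw [h]
    exact Measurable.ite (measurableSet_lt measurable_const measurable_id.abs)
      (aux_sign_meas) (measurable_id.div_const θ)
  have hgm : Measurable g := (hsm.mul measurable_id).mul hEc.measurable
  have hbound : ∀ x, ‖g x‖ ≤ |x * E x| := by
    intro x
    have hEpos : 0 < E x := Real.exp_pos _
    have hs1 : |s x| ≤ 1 := by
      rw [hsx x]
      split_ifs with hx
      · rcases Real.sign_apply_eq x with h | h | h <;> rw [h] <;> norm_num
      · push_neg at hx
        rw [abs_div, abs_of_pos hθ, div_le_one hθ]
        exact hx
    have h1 : ‖g x‖ = |s x| * (|x| * E x) := by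
      rw [hgdef]
      simp only [Real.norm_eq_abs, abs_mul, abs_of_pos hEpos]
      ring
    have h2 : |x * E x| = |x| * E x := by
      rw [abs_mul, abs_of_pos hEpos]
    rw [h1, h2]
    calc |s x| * (|x| * E x) ≤ 1 * (|x| * E x) :=
          mul_le_mul_of_nonneg_right hs1 (by positivity)
      _ = |x| * E x := one_mul _
  have hintg : Integrable g :=
    (integrable_mul_exp_neg_mul_sq hb).abs.mono' hgm.aestronglyMeasurable (Filter.Eventually.of_forall hbound)
  -- reduce to Lebesgue integral
  have hred : ∫ x, s x * x ∂(gaussianReal 0 v) = (Real.sqrt (2 * π * (v:ℝ)))⁻¹ * ∫ x, g x := by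
    rw [aux_red v hvne, ← integral_const_mul]
    congr 1
    funext x
    rw [gaussianPDFReal]
    have harg : -(x - 0) ^ 2 / (2 * (v:ℝ)) = -b * x ^ 2 := by
      rw [hbdef, sub_zero]
      field_simp
    rw [harg, hgdef]
    ring
  -- evaluate pieces
  have htailC : ∫ x in Set.Ioi θ, g x = (v:ℝ) * E θ := by
    rw [setIntegral_congr_fun measurableSet_Ioi (g := fun x => x * E x)
      (fun x hx => by
        have hx' : θ < x := hx
        have hx0 : 0 < x := lt_trans hθ hx'
        rw [hgdef]
        simp only
        rw [hsx x, if_pos (by rwa [abs_of_pos hx0]), Real.sign_of_pos hx0, one_mul])]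
    exact aux_tail hb h2bv
  have htailA : ∫ x in Set.Iic (-θ), g x = (v:ℝ) * E θ := by
    rw [← integral_comp_neg_Ioi]
    rw [setIntegral_congr_fun measurableSet_Ioi (g := fun x => x * E x)
      (fun x hx => by
        have hx' : θ < x := hx
        have hx0 : 0 < x := lt_trans hθ hx'
        have hxneg : -x < 0 := by linarith
        simp only [hgdef]
        rw [hsx (-x), if_pos (by rwa [abs_neg, abs_of_pos hx0]), Real.sign_of_neg hxneg]
        rw [hEdef]
        simp only [neg_sq]
        ring)]
    exact aux_tail hb h2bv
  have hmidB : ∫ x in Set.Ioc (-θ) θ, g x =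
      θ⁻¹ * ((v:ℝ) * (∫ x in (-θ)..θ, E x) - 2 * (v:ℝ) * θ * E θ) := by
    rw [setIntegral_congr_fun measurableSet_Ioc (g := fun x => θ⁻¹ * (x ^ 2 * E x))
      (fun x hx => by
        have h1 : -θ < x := hx.1
        have h2 : x ≤ θ := hx.2
        have habs : ¬ θ < |x| := by
          push_neg
          exact abs_le.mpr ⟨by linarith, h2⟩
        simp only [hgdef]
        rw [hsx x, if_neg habs]
        ring)]
    rw [← intervalIntegral.integral_of_le (by linarith : -θ ≤ θ),
      intervalIntegral.integral_const_mul, aux_mid h2bv]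
  -- total integral of g
  have hJ : ∫ x, g x = θ⁻¹ * (v:ℝ) * ∫ x in (-θ)..θ, E x := by
    have h1 : (∫ x in Set.Iic θ, g x) + ∫ x in Set.Ioi θ, g x = ∫ x, g x :=
      intervalIntegral.integral_Iic_add_Ioi hintg.integrableOn hintg.integrableOn
    have h2 : ∫ x in Set.Iic θ, g x =
        (∫ x in Set.Iic (-θ), g x) + ∫ x in Set.Ioc (-θ) θ, g x := by
      rw [← setIntegral_union (Set.Iic_disjoint_Ioc le_rfl) measurableSet_Ioc
        hintg.integrableOn hintg.integrableOn, Set.Iic_union_Ioc_eq_Iic (by linarith : -θ ≤ θ)]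
    rw [← h1, h2, htailA, htailC, hmidB]
    field_simp
    ring
  -- evaluate the central integral via erf
  set d : ℝ := (Real.sqrt (2 * (v:ℝ)))⁻¹ with hddef
  have hS : 0 < Real.sqrt (2 * (v:ℝ)) := Real.sqrt_pos.mpr (by positivity)
  have hd0 : 0 < d := inv_pos.mpr hS
  have hd2 : d ^ 2 = b := by
    rw [hddef, hbdef, inv_pow, Real.sq_sqrt (by positivity : (0:ℝ) ≤ 2 * (v:ℝ))]
  have hIval : ∫ x in (-θ)..θ, E x = d⁻¹ * (2 * ∫ u in (0:ℝ)..(d * θ), Real.exp (-u ^ 2)) := by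
    have hEeq : ∀ x : ℝ, E x = (fun u => Real.exp (-u ^ 2)) (d * x) := by
      intro x
      simp only [hEdef]
      congr 1
      rw [mul_pow, hd2]
      ring
    rw [intervalIntegral.integral_congr (fun x _ => hEeq x),
      intervalIntegral.integral_comp_mul_left (fun u => Real.exp (-u ^ 2)) hd0.ne', smul_eq_mul, mul_neg]
    rw [aux_even (d * θ)]
  have hm : Real.sqrt (α / (2 * (1 + c))) = d * θ := by
    have hθ2 : θ ^ 2 = α / (1 + k) ^ 2 := by
      rw [hθdef, div_pow, Real.sq_sqrt hα.le]
    have h1 : (d * θ) ^ 2 = α / (2 * (1 + c)) := by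
      rw [mul_pow, hd2, hbdef, hv, hθ2]
      field_simp
    rw [← h1, Real.sqrt_sq (by positivity)]
  rw [hred, hJ, hIval, hm, erf]
  -- final scalar identity
  have hZ : Real.sqrt (2 * π * (v:ℝ)) = Real.sqrt π * Real.sqrt (2 * (v:ℝ)) := by
    rw [← Real.sqrt_mul pi_pos.le]
    congr 1
    ring
  have hdinv : d⁻¹ = Real.sqrt (2 * (v:ℝ)) := by rw [hddef, inv_inv]
  have hsp : 0 < Real.sqrt π := Real.sqrt_pos.mpr pi_pos
  rw [hZ, hdinv, hv, hθdef]
  field_simp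
end
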